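/- Let C be a Markov category. Define Δ̄(C) to be the category with the same objects as C and hom-sets Δ̄(C)(X,Y) = Δ̄(C(X,Y)), the countably supported probability distributions on C(X,Y), with composition the unique bilinear (biconvex) extension of composition in C, and tensor extended similarly. Then Δ̄(C) is a Markov category, the evident inclusion C ↪ Δ̄(C) (via Dirac distributions) is a Markov functor, and Δ̄(C) is an externally iterable coinflip Markov category. -/

import Mathlib

open CategoryTheory MonoidalCategory

universe v u

class MarkovCategory' (C : Type*) [Category C] [MonoidalCategory C]
    [SymmetricCategory C] where
  copy : ∀ X : C, X ⟶ X ⊗ X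
  del : ∀ X : C, X ⟶ 𝟙_ C
  copy_del : ∀ X : C, copy X ≫ (del X ▷ X) = (λ_ X).inv
  copy_comm : ∀ X : C, copy X ≫ (β_ X X).hom = copy X
  copy_assoc : ∀ X : C,
    copy X ≫ (copy X ▷ X) ≫ (α_ X X X).hom = copy X ≫ (X ◁ copy X)
  del_natural : ∀ {X Y : C} (f : X ⟶ Y), f ≫ del Y = del X
  del_unit : del (𝟙_ C) = 𝟙 (𝟙_ C)
  copy_unit : copy (𝟙_ C) = (λ_ (𝟙_ C)).inv
  copy_tensor : ∀ X Y : C, copy (X ⊗ Y) = (copy X ⊗ₘ copy Y) ≫ tensorμ X X Y Y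
  del_tensor : ∀ X Y : C, del (X ⊗ Y) = (del X ⊗ₘ del Y) ≫ (λ_ (𝟙_ C)).hom

structure CoinflipStruct (C : Type*) [Category C] [MonoidalCategory C]
    [SymmetricCategory C] [MarkovCategory' C] where
  m : ∀ {X Y : C}, (X ⟶ Y) → (X ⟶ Y) → (X ⟶ Y)
  idem : ∀ {X Y : C} (f : X ⟶ Y), m f f = f
  comm : ∀ {X Y : C} (f g : X ⟶ Y), m f g = m g f
  medial : ∀ {X Y : C} (f g h k : X ⟶ Y), m (m f g) (m h k) = m (m f h) (m g k)
  pre : ∀ {X Y Z : C} (h : X ⟶ Y) (f g : Y ⟶ Z), h ≫ m f g = m (h ≫ f) (h ≫ g)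
  post : ∀ {X Y Z : C} (f g : X ⟶ Y) (h : Y ⟶ Z), m f g ≫ h = m (f ≫ h) (g ≫ h)

noncomputable def pmfMid {X : Type v} (μ ν : PMF X) : PMF X :=
  ⟨fun x => (μ x + ν x) / 2, by
    have h : ∑' x, (μ x + ν x) / 2 = 1 := by
      simp only [div_eq_mul_inv]
      rw [ENNReal.tsum_mul_right, ENNReal.tsum_add, μ.tsum_coe, ν.tsum_coe,
        one_add_one_eq_two]
      exact ENNReal.mul_inv_cancel (by norm_num) (by norm_num)
    exact h ▸ ENNReal.summable.hasSum⟩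

variable (C : Type u) [Category.{v} C] [MonoidalCategory C] [SymmetricCategory C]
  [MarkovCategory' C]

/-- `Δ̄(C)`: same objects as `C`, morphisms the countably supported probability
distributions on morphisms of `C`. -/
def DCat (C : Type u) := C

variable {C}

/-- Identification of the objects of `Δ̄(C)` with those of `C`. -/
@[reducible] def DCat.of (X : DCat C) : C := X

/-- Bilinear extension of composition to distributions on morphisms. -/
noncomputable def dcomp {X Y Z : C} (f : PMF (X ⟶ Y)) (g : PMF (Y ⟶ Z)) :
    PMF (X ⟶ Z) :=
  f.bind fun a => g.bind fun b => PMF.pure (a ≫ b)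

noncomputable instance : Category.{v} (DCat C) where
  Hom X Y := PMF (DCat.of X ⟶ DCat.of Y)
  id X := PMF.pure (𝟙 (DCat.of X))
  comp {_ _ _} f g := dcomp f g
  id_comp f := by simp [dcomp, PMF.pure_bind, PMF.bind_pure]
  comp_id f := by simp [dcomp, PMF.pure_bind, PMF.bind_pure]
  assoc f g h := by simp [dcomp, PMF.bind_bind, PMF.pure_bind]

@[simp] lemma DCat.comp_def {X Y Z : DCat C} (f : X ⟶ Y) (g : Y ⟶ Z) :
    f ≫ g = dcomp f g := rfl

@[simp] lemma DCat.id_def (X : DCat C) : 𝟙 X = PMF.pure (𝟙 (DCat.of X)) := rfl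

/-- Bilinear extension of the tensor product of morphisms. -/
noncomputable def dtensorHom {X X' Y Y' : C} (f : PMF (X ⟶ X')) (g : PMF (Y ⟶ Y')) :
    PMF (X ⊗ Y ⟶ X' ⊗ Y') :=
  f.bind fun a => g.bind fun b => PMF.pure (a ⊗ₘ b)

set_option maxHeartbeats 1000000 in
noncomputable instance : MonoidalCategory (DCat C) where
  tensorObj X Y := (DCat.of X ⊗ DCat.of Y : C)
  whiskerLeft X {Y Z} g := g.bind fun b => PMF.pure (DCat.of X ◁ b)
  whiskerRight {X Y} f Z := f.bind fun a => PMF.pure (a ▷ DCat.of Z)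
  tensorHom f g := dtensorHom f g
  tensorUnit := (𝟙_ C : C)
  associator X Y Z :=
    { hom := PMF.pure (α_ (DCat.of X) (DCat.of Y) (DCat.of Z)).hom
      inv := PMF.pure (α_ (DCat.of X) (DCat.of Y) (DCat.of Z)).inv
      hom_inv_id := by simp [CategoryStruct.comp, CategoryStruct.id, dcomp]
      inv_hom_id := by simp [CategoryStruct.comp, CategoryStruct.id, dcomp] }
  leftUnitor X :=
    { hom := PMF.pure (λ_ (DCat.of X)).hom
      inv := PMF.pure (λ_ (DCat.of X)).inv
      hom_inv_id := by simp [CategoryStruct.comp, CategoryStruct.id, dcomp]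
      inv_hom_id := by simp [CategoryStruct.comp, CategoryStruct.id, dcomp] }
  rightUnitor X :=
    { hom := PMF.pure (ρ_ (DCat.of X)).hom
      inv := PMF.pure (ρ_ (DCat.of X)).inv
      hom_inv_id := by simp [CategoryStruct.comp, CategoryStruct.id, dcomp]
      inv_hom_id := by simp [CategoryStruct.comp, CategoryStruct.id, dcomp] }
  tensorHom_def f g := by
    simp [CategoryStruct.comp, CategoryStruct.id, dtensorHom, dcomp, PMF.bind_bind, PMF.pure_bind,
      MonoidalCategory.tensorHom_def]
  id_tensorHom_id X Y := by simp [CategoryStruct.comp, CategoryStruct.id, dtensorHom, PMF.pure_bind]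
  tensorHom_comp_tensorHom {X₁ Y₁ Z₁ X₂ Y₂ Z₂} f₁ f₂ g₁ g₂ := by
    symm
    simp only [CategoryStruct.comp, DCat.comp_def, dtensorHom, dcomp, PMF.bind_bind, PMF.pure_bind]
    refine congrArg (fun k => f₁.bind k) (funext fun a => ?_)
    rw [PMF.bind_comm]
    simp only [MonoidalCategory.tensorHom_comp_tensorHom]
  whiskerLeft_id X Y := by simp [CategoryStruct.id]
  id_whiskerRight X Y := by simp [CategoryStruct.id]
  associator_naturality f₁ f₂ f₃ := by
    simp [CategoryStruct.comp, CategoryStruct.id, dtensorHom, dcomp, PMF.bind_bind, PMF.pure_bind,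
      MonoidalCategory.associator_naturality]
  leftUnitor_naturality f := by
    simp [CategoryStruct.comp, CategoryStruct.id, dcomp, PMF.bind_bind, PMF.pure_bind,
      MonoidalCategory.leftUnitor_naturality]
  rightUnitor_naturality f := by
    simp [CategoryStruct.comp, CategoryStruct.id, dcomp, PMF.bind_bind, PMF.pure_bind,
      MonoidalCategory.rightUnitor_naturality]
  pentagon W X Y Z := by simp [CategoryStruct.comp, CategoryStruct.id, dcomp, PMF.pure_bind, MonoidalCategory.pentagon]
  triangle X Y := by simp [CategoryStruct.comp, CategoryStruct.id, dcomp, PMF.pure_bind, MonoidalCategory.triangle]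

@[simp] lemma DCat.whiskerLeft_def (X : DCat C) {Y Z : DCat C} (g : Y ⟶ Z) :
    X ◁ g = g.bind fun b => PMF.pure (DCat.of X ◁ b) := rfl

@[simp] lemma DCat.whiskerRight_def {X Y : DCat C} (f : X ⟶ Y) (Z : DCat C) :
    f ▷ Z = f.bind fun a => PMF.pure (a ▷ DCat.of Z) := rfl

@[simp] lemma DCat.tensorHom_def {X X' Y Y' : DCat C} (f : X ⟶ X') (g : Y ⟶ Y') :
    f ⊗ₘ g = dtensorHom f g := rfl

@[simp] lemma DCat.of_tensor (X Y : DCat C) :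
    DCat.of (X ⊗ Y) = (DCat.of X ⊗ DCat.of Y : C) := rfl

@[simp] lemma DCat.of_unit : DCat.of (𝟙_ (DCat C)) = (𝟙_ C) := rfl

@[simp] lemma DCat.associator_hom (X Y Z : DCat C) :
    (α_ X Y Z).hom = PMF.pure (α_ (DCat.of X) (DCat.of Y) (DCat.of Z)).hom := rfl

@[simp] lemma DCat.associator_inv (X Y Z : DCat C) :
    (α_ X Y Z).inv = PMF.pure (α_ (DCat.of X) (DCat.of Y) (DCat.of Z)).inv := rfl

@[simp] lemma DCat.leftUnitor_hom (X : DCat C) :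
    (λ_ X).hom = PMF.pure (λ_ (DCat.of X)).hom := rfl

@[simp] lemma DCat.leftUnitor_inv (X : DCat C) :
    (λ_ X).inv = PMF.pure (λ_ (DCat.of X)).inv := rfl

@[simp] lemma DCat.rightUnitor_hom (X : DCat C) :
    (ρ_ X).hom = PMF.pure (ρ_ (DCat.of X)).hom := rfl

@[simp] lemma DCat.rightUnitor_inv (X : DCat C) :
    (ρ_ X).inv = PMF.pure (ρ_ (DCat.of X)).inv := rfl

set_option maxHeartbeats 1000000 in
noncomputable instance : SymmetricCategory (DCat C) where
  braiding X Y :=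
    { hom := PMF.pure (β_ (DCat.of X) (DCat.of Y)).hom
      inv := PMF.pure (β_ (DCat.of X) (DCat.of Y)).inv
      hom_inv_id := by simp [CategoryStruct.comp, CategoryStruct.id, MonoidalCategoryStruct.whiskerLeft, MonoidalCategoryStruct.whiskerRight, MonoidalCategoryStruct.tensorHom, MonoidalCategoryStruct.leftUnitor, MonoidalCategoryStruct.tensorUnit, dcomp]
      inv_hom_id := by simp [CategoryStruct.comp, CategoryStruct.id, MonoidalCategoryStruct.whiskerLeft, MonoidalCategoryStruct.whiskerRight, MonoidalCategoryStruct.tensorHom, MonoidalCategoryStruct.leftUnitor, MonoidalCategoryStruct.tensorUnit, dcomp] }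
  braiding_naturality_right := by
    intro X Y Z f
    simp [CategoryStruct.comp, CategoryStruct.id, MonoidalCategoryStruct.whiskerLeft, MonoidalCategoryStruct.whiskerRight, MonoidalCategoryStruct.tensorHom, MonoidalCategoryStruct.leftUnitor, MonoidalCategoryStruct.tensorUnit, dcomp, PMF.bind_bind, PMF.pure_bind]
  braiding_naturality_left := by
    intro X Y f Z
    simp [CategoryStruct.comp, CategoryStruct.id, MonoidalCategoryStruct.whiskerLeft, MonoidalCategoryStruct.whiskerRight, MonoidalCategoryStruct.tensorHom, MonoidalCategoryStruct.leftUnitor, MonoidalCategoryStruct.tensorUnit, dcomp, PMF.bind_bind, PMF.pure_bind]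
  hexagon_forward X Y Z := by
    simp [CategoryStruct.comp, CategoryStruct.id, MonoidalCategoryStruct.whiskerLeft, MonoidalCategoryStruct.whiskerRight, MonoidalCategoryStruct.tensorHom, MonoidalCategoryStruct.leftUnitor, MonoidalCategoryStruct.tensorUnit, dcomp, PMF.pure_bind, BraidedCategory.hexagon_forward]
  hexagon_reverse X Y Z := by
    simp [CategoryStruct.comp, CategoryStruct.id, MonoidalCategoryStruct.whiskerLeft, MonoidalCategoryStruct.whiskerRight, MonoidalCategoryStruct.tensorHom, MonoidalCategoryStruct.leftUnitor, MonoidalCategoryStruct.tensorUnit, dcomp, PMF.pure_bind, BraidedCategory.hexagon_reverse]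
  symmetry X Y := by
    simp [CategoryStruct.comp, CategoryStruct.id, MonoidalCategoryStruct.whiskerLeft, MonoidalCategoryStruct.whiskerRight, MonoidalCategoryStruct.tensorHom, MonoidalCategoryStruct.leftUnitor, MonoidalCategoryStruct.tensorUnit, dcomp, PMF.pure_bind, SymmetricCategory.symmetry]

@[simp] lemma DCat.braiding_hom (X Y : DCat C) :
    (β_ X Y).hom = PMF.pure (β_ (DCat.of X) (DCat.of Y)).hom := rfl

@[simp] lemma DCat.braiding_inv (X Y : DCat C) :
    (β_ X Y).inv = PMF.pure (β_ (DCat.of X) (DCat.of Y)).inv := rfl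

set_option maxHeartbeats 1000000 in
noncomputable instance : MarkovCategory' (DCat C) where
  copy X := PMF.pure (MarkovCategory'.copy (DCat.of X))
  del X := PMF.pure (MarkovCategory'.del (DCat.of X))
  copy_del X := by simp [CategoryStruct.comp, CategoryStruct.id, MonoidalCategoryStruct.whiskerLeft, MonoidalCategoryStruct.whiskerRight, MonoidalCategoryStruct.tensorHom, MonoidalCategoryStruct.leftUnitor, MonoidalCategoryStruct.tensorUnit, dcomp, PMF.pure_bind, MarkovCategory'.copy_del]
  copy_comm X := by simp [CategoryStruct.comp, CategoryStruct.id, MonoidalCategoryStruct.whiskerLeft, MonoidalCategoryStruct.whiskerRight, MonoidalCategoryStruct.tensorHom, MonoidalCategoryStruct.leftUnitor, MonoidalCategoryStruct.tensorUnit, dcomp, PMF.pure_bind, MarkovCategory'.copy_comm]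
  copy_assoc X := by simp [CategoryStruct.comp, CategoryStruct.id, MonoidalCategoryStruct.whiskerLeft, MonoidalCategoryStruct.whiskerRight, MonoidalCategoryStruct.tensorHom, MonoidalCategoryStruct.leftUnitor, MonoidalCategoryStruct.tensorUnit, dcomp, PMF.pure_bind, MarkovCategory'.copy_assoc]
  del_natural := by
    intro X Y f
    simp [CategoryStruct.comp, CategoryStruct.id, MonoidalCategoryStruct.whiskerLeft, MonoidalCategoryStruct.whiskerRight, MonoidalCategoryStruct.tensorHom, MonoidalCategoryStruct.leftUnitor, MonoidalCategoryStruct.tensorUnit, dcomp, PMF.pure_bind, PMF.bind_bind, MarkovCategory'.del_natural,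
      PMF.bind_const]
  del_unit := by simp [MonoidalCategoryStruct.leftUnitor, MonoidalCategoryStruct.tensorUnit, CategoryStruct.comp, CategoryStruct.id, MonoidalCategoryStruct.whiskerLeft, MonoidalCategoryStruct.whiskerRight, MonoidalCategoryStruct.tensorHom, MonoidalCategoryStruct.leftUnitor, MonoidalCategoryStruct.tensorUnit, MarkovCategory'.del_unit]
  copy_unit := by simp [CategoryStruct.comp, CategoryStruct.id, MonoidalCategoryStruct.whiskerLeft, MonoidalCategoryStruct.whiskerRight, MonoidalCategoryStruct.tensorHom, MonoidalCategoryStruct.leftUnitor, MonoidalCategoryStruct.tensorUnit, MarkovCategory'.copy_unit]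
  copy_tensor X Y := by
    simp [MonoidalCategoryStruct.associator, BraidedCategory.braiding, CategoryStruct.comp, CategoryStruct.id, MonoidalCategoryStruct.whiskerLeft, MonoidalCategoryStruct.whiskerRight, MonoidalCategoryStruct.tensorHom, MonoidalCategoryStruct.leftUnitor, MonoidalCategoryStruct.tensorUnit, dcomp, dtensorHom, PMF.pure_bind, tensorμ,
      MarkovCategory'.copy_tensor]
  del_tensor X Y := by
    simp [CategoryStruct.comp, CategoryStruct.id, MonoidalCategoryStruct.whiskerLeft, MonoidalCategoryStruct.whiskerRight, MonoidalCategoryStruct.tensorHom, MonoidalCategoryStruct.leftUnitor, MonoidalCategoryStruct.tensorUnit, dcomp, dtensorHom, PMF.pure_bind, MarkovCategory'.del_tensor]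

/-- The inclusion `C ↪ Δ̄(C)` via Dirac distributions. -/
noncomputable def DiracFunctor : C ⥤ DCat C where
  obj X := X
  map f := PMF.pure f
  map_id X := rfl
  map_comp f g := by simp [CategoryStruct.comp, DCat.comp_def, dcomp, PMF.pure_bind]

open scoped ENNReal

@[simp] lemma pmfMid_apply {X : Type v} (μ ν : PMF X) (x : X) :
    pmfMid μ ν x = (μ x + ν x) / 2 := rfl

lemma pmfMid_idem {X : Type v} (μ : PMF X) : pmfMid μ μ = μ := by
  ext x; rw [pmfMid_apply, ENNReal.add_div, ENNReal.add_halves]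

lemma pmfMid_comm {X : Type v} (μ ν : PMF X) : pmfMid μ ν = pmfMid ν μ := by
  ext x; simp [add_comm]

lemma pmfMid_medial {X : Type v} (a b c d : PMF X) :
    pmfMid (pmfMid a b) (pmfMid c d) = pmfMid (pmfMid a c) (pmfMid b d) := by
  ext x
  simp only [pmfMid_apply, ← ENNReal.add_div]
  congr 2
  ring

lemma pmfMid_bind_left {A B : Type v} (μ ν : PMF A) (k : A → PMF B) :
    (pmfMid μ ν).bind k = pmfMid (μ.bind k) (ν.bind k) := by
  ext x
  simp only [PMF.bind_apply, pmfMid_apply, div_eq_mul_inv]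
  calc ∑' a, (μ a + ν a) * 2⁻¹ * (k a) x
      = ∑' a, (μ a * (k a) x * 2⁻¹ + ν a * (k a) x * 2⁻¹) :=
        tsum_congr fun a => by ring
    _ = (∑' a, μ a * (k a) x + ∑' a, ν a * (k a) x) * 2⁻¹ := by
        rw [ENNReal.tsum_add, ENNReal.tsum_mul_right, ENNReal.tsum_mul_right,
          ← add_mul]

lemma pmfMid_bind_right {A B : Type v} (μ : PMF A) (k l : A → PMF B) :
    μ.bind (fun a => pmfMid (k a) (l a)) = pmfMid (μ.bind k) (μ.bind l) := by
  ext x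
  simp only [PMF.bind_apply, pmfMid_apply, div_eq_mul_inv]
  calc ∑' a, μ a * (((k a) x + (l a) x) * 2⁻¹)
      = ∑' a, (μ a * (k a) x * 2⁻¹ + μ a * (l a) x * 2⁻¹) :=
        tsum_congr fun a => by ring
    _ = (∑' a, μ a * (k a) x + ∑' a, μ a * (l a) x) * 2⁻¹ := by
        rw [ENNReal.tsum_add, ENNReal.tsum_mul_right, ENNReal.tsum_mul_right,
          ← add_mul]

lemma half_pow_tsum : ∑' n : ℕ, (2⁻¹ : ℝ≥0∞) ^ (n + 1) = 1 := by
  simp only [pow_succ']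
  rw [ENNReal.tsum_mul_left, ENNReal.tsum_geometric]
  rw [show (1 : ℝ≥0∞) - 2⁻¹ = 2⁻¹ by
    exact ENNReal.sub_eq_of_eq_add (by norm_num) ENNReal.inv_two_add_inv_two.symm]
  rw [inv_inv, ENNReal.inv_mul_cancel (by norm_num) (by norm_num)]

noncomputable def iterPMF {A Z : Type v} (t : Z → Z) (v : Z → PMF A) (z : Z) :
    PMF A :=
  ⟨fun x => ∑' n : ℕ, 2⁻¹ ^ (n + 1) * v (t^[n] z) x, by
    have h : ∑' x, ∑' n : ℕ, (2⁻¹:ℝ≥0∞) ^ (n + 1) * v (t^[n] z) x = 1 := by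
      rw [ENNReal.tsum_comm]
      calc ∑' (n : ℕ), ∑' x, (2⁻¹:ℝ≥0∞) ^ (n + 1) * v (t^[n] z) x
          = ∑' n : ℕ, (2⁻¹:ℝ≥0∞) ^ (n + 1) := by
            refine tsum_congr fun n => ?_
            rw [ENNReal.tsum_mul_left, (v (t^[n] z)).tsum_coe, mul_one]
        _ = 1 := half_pow_tsum
    exact h ▸ ENNReal.summable.hasSum⟩

@[simp] lemma iterPMF_apply {A Z : Type v} (t : Z → Z) (v : Z → PMF A) (z : Z)
    (x : A) : iterPMF t v z x = ∑' n : ℕ, 2⁻¹ ^ (n + 1) * v (t^[n] z) x := rfl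

lemma iterPMF_fix {A Z : Type v} (t : Z → Z) (v : Z → PMF A) (z : Z) :
    iterPMF t v z = pmfMid (iterPMF t v (t z)) (v z) := by
  ext x
  simp only [iterPMF_apply, pmfMid_apply, div_eq_mul_inv]
  rw [tsum_eq_zero_add' ENNReal.summable]
  have h1 : ∀ n : ℕ, t^[n] (t z) = t^[n + 1] z := fun n =>
    (Function.iterate_succ_apply t n z).symm
  have e1 : (2⁻¹:ℝ≥0∞) ^ (0 + 1) * (v (t^[0] z)) x = (v z) x * 2⁻¹ := by
    simp [mul_comm]
  have e2 : ∑' n : ℕ, (2⁻¹:ℝ≥0∞) ^ (n + 1 + 1) * (v (t^[n + 1] z)) x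
      = (∑' n : ℕ, (2⁻¹:ℝ≥0∞) ^ (n + 1) * (v (t^[n] (t z))) x) * 2⁻¹ := by
    rw [← ENNReal.tsum_mul_right]
    refine tsum_congr fun n => ?_
    rw [h1 n]; ring
  rw [e1, e2, add_mul, add_comm]

lemma iterPMF_unique {A Z : Type v} (t : Z → Z) (v : Z → PMF A) (u : Z → PMF A)
    (hu : ∀ z, u z = pmfMid (u (t z)) (v z)) : u = iterPMF t v := by
  funext z
  ext x
  have key : ∀ N z, u z x =
      (∑ k ∈ Finset.range N, 2⁻¹ ^ (k + 1) * v (t^[k] z) x)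
        + 2⁻¹ ^ N * u (t^[N] z) x := by
    intro N
    induction N with
    | zero => intro z; simp
    | succ N ih =>
      intro z
      rw [ih z, Finset.sum_range_succ]
      have h2 : (u (t^[N] z)) x = ((u (t^[N + 1] z)) x + (v (t^[N] z)) x) * 2⁻¹ := by
        rw [hu (t^[N] z), pmfMid_apply, div_eq_mul_inv,
          ← Function.iterate_succ_apply' t N z]
      rw [h2]; ring
  rw [iterPMF_apply, ENNReal.tsum_eq_iSup_sum' (fun n => Finset.range n)
    (fun s => Finset.exists_nat_subset_range s)]
  refine le_antisymm ?_ ?_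
  · refine ENNReal.le_of_forall_pos_le_add fun ε hε _ => ?_
    obtain ⟨N, hN⟩ := ENNReal.exists_inv_two_pow_lt
      (show (ε : ℝ≥0∞) ≠ 0 by exact_mod_cast hε.ne')
    calc u z x ≤ (∑ k ∈ Finset.range N, 2⁻¹ ^ (k + 1) * v (t^[k] z) x)
          + 2⁻¹ ^ N := by
          rw [key N z]
          exact add_le_add le_rfl
            ((mul_le_mul_right (PMF.coe_le_one _ _) _).trans (mul_one _).le)
      _ ≤ _ := add_le_add (le_iSup (fun n => ∑ k ∈ Finset.range n,
            (2⁻¹:ℝ≥0∞) ^ (k + 1) * v (t^[k] z) x) N) hN.le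
  · refine iSup_le fun N => ?_
    rw [key N z]
    exact le_add_right le_rfl

/-- `Δ̄(C)` is a Markov category (witnessed by the instances above), the Dirac
inclusion `C ↪ Δ̄(C)` is a (strong, symmetric) Markov functor, and `Δ̄(C)` is an
externally iterable coinflip Markov category whose midpoint operation on
hom-sets is `m(μ,ν) = (μ+ν)/2`. -/
theorem dcat_markov_and_free_coinflip :
    -- the inclusion is strong monoidal (strictly) and Markov:
    (∀ {X X' Y Y' : C} (f : X ⟶ X') (g : Y ⟶ Y'),
      (DiracFunctor (C := C)).map (f ⊗ₘ g) =
        ((DiracFunctor (C := C)).map f ⊗ₘ (DiracFunctor (C := C)).map g)) ∧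
    (∀ X : C, MarkovCategory'.copy ((DiracFunctor (C := C)).obj X) =
      (DiracFunctor (C := C)).map (MarkovCategory'.copy X)) ∧
    (∀ X : C, MarkovCategory'.del ((DiracFunctor (C := C)).obj X) =
      (PMF.pure (MarkovCategory'.del X) : PMF (X ⟶ 𝟙_ C))) ∧
    -- Δ̄(C) is an externally iterable coinflip Markov category with midpoint
    -- operation (μ+ν)/2:
    (∃ m : CoinflipStruct (DCat C),
      (∀ (X Y : DCat C) (μ ν : X ⟶ Y), m.m μ ν = pmfMid μ ν) ∧
      (∀ (X Y : DCat C) (Z : Type v) (s : Z → Z × (X ⟶ Y)),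
        ∃! u : Z → (X ⟶ Y), ∀ z, u z = m.m (u (s z).1) (s z).2)) := by
  refine ⟨?_, ?_, ?_, ?_⟩
  · intro X X' Y Y' f g
    show PMF.pure (f ⊗ₘ g) = dtensorHom (PMF.pure f) (PMF.pure g)
    simp [DiracFunctor, dtensorHom, PMF.pure_bind]
  · intro X; rfl
  · intro X; rfl
  · refine ⟨{ m := fun f g => pmfMid f g
              idem := fun f => pmfMid_idem f
              comm := fun f g => pmfMid_comm f g
              medial := fun f g h k => pmfMid_medial f g h k
              pre := ?_
              post := ?_ }, fun X Y μ ν => rfl, ?_⟩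
    · intro X Y Z h f g
      show dcomp h (pmfMid f g) = pmfMid (dcomp h f) (dcomp h g)
      simp only [dcomp, pmfMid_bind_left, pmfMid_bind_right]
    · intro X Y Z f g h
      show dcomp (pmfMid f g) h = pmfMid (dcomp f h) (dcomp g h)
      simp only [dcomp, pmfMid_bind_left]
    · intro X Y Z s
      refine ⟨iterPMF (fun z => (s z).1) (fun z => (s z).2), fun z => ?_, fun u hu => ?_⟩
      · exact iterPMF_fix (fun z => (s z).1) (fun z => (s z).2) z
      · exact iterPMF_unique (fun z => (s z).1) (fun z => (s z).2) u hu
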